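/- arXiv:2412.20079 — 2 statements merged into one kernel-verified Lean document; each statement's English description precedes it below -/
import Mathlib

section
/- For a gadget G with postselection data (C, L') satisfying that broken states are preserved by transitions on L', a traversal sequence X on L' is legal for PostSelect(G,C,L') from a nonbroken state q if and only if the concatenated sequence X·C is legal for G from q. -/
/-- A gadget: states `Q`, locations `L`, and a transition relation
`T q a r b` meaning the agent may enter at `a` in state `q` and exit at `b`,
leaving the gadget in state `r`. -/
structure Gadget (Q L : Type) where
  T : Q → L → Q → L → Prop

namespace Gadget

variable {Q L : Type}

/-- `G.LegalEnd q X r`: the traversal sequence `X` (a list of (entrance, exit)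
pairs) is legal from state `q`, ending in state `r`. -/
inductive LegalEnd (G : Gadget Q L) : Q → List (L × L) → Q → Prop
  | nil (q : Q) : LegalEnd G q [] q
  | cons {q q' r : Q} {a b : L} {X : List (L × L)} :
      G.T q a q' b → LegalEnd G q' X r → LegalEnd G q ((a, b) :: X) r

/-- `X` is legal from state `q` if it is legal ending in some state. -/
def Legal (G : Gadget Q L) (q : Q) (X : List (L × L)) : Prop :=
  ∃ r, G.LegalEnd q X r

/-- A state is broken w.r.t. a checking sequence `C` if `C` is not legal from it. -/
def Broken (G : Gadget Q L) (C : List (L × L)) (q : Q) : Prop :=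
  ¬ G.Legal q C

/-- The postselected gadget: locations restricted to `L'`, states restricted to
nonbroken states, transitions restricted accordingly. -/
def PostSelect (G : Gadget Q L) (C : List (L × L)) (L' : Set L) : Gadget Q L where
  T q a r b := G.T q a r b ∧ a ∈ L' ∧ b ∈ L' ∧ ¬ G.Broken C q ∧ ¬ G.Broken C r

/-- Restriction of a gadget to a subset of its locations. -/
def restrict (G : Gadget Q L) (L' : Set L) : Gadget Q L where
  T q a r b := G.T q a r b ∧ a ∈ L' ∧ b ∈ L'

/-- The transitive closure of a gadget. -/
def transClosure (G : Gadget Q L) : Gadget Q L where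
  T q a r b :=
    Relation.TransGen (fun p p' : Q × L => G.T p.1 p.2 p'.1 p'.2) (q, a) (r, b)

end Gadget

namespace Gadget

variable {Q L : Type}

lemma LegalEnd.append {G : Gadget Q L} {q m r : Q} {X Y : List (L × L)}
    (h1 : G.LegalEnd q X m) (h2 : G.LegalEnd m Y r) : G.LegalEnd q (X ++ Y) r := by
  induction h1 with
  | nil => simpa using h2
  | cons t _ ih => exact .cons t (ih h2)

lemma LegalEnd.split {G : Gadget Q L} {q r : Q} {X Y : List (L × L)}
    (h : G.LegalEnd q (X ++ Y) r) : ∃ m, G.LegalEnd q X m ∧ G.LegalEnd m Y r := by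
  induction X generalizing q with
  | nil => exact ⟨q, .nil q, by simpa using h⟩
  | cons p X ih =>
    obtain ⟨a, b⟩ := p
    cases h with
    | cons t h =>
      obtain ⟨m, h1, h2⟩ := ih h
      exact ⟨m, .cons t h1, h2⟩

lemma broken_propagate {G : Gadget Q L} {C : List (L × L)} {L' : Set L}
    (hpres : ∀ q a q' b, G.Broken C q → G.T q a q' b → a ∈ L' → b ∈ L' → G.Broken C q')
    {q r : Q} {X : List (L × L)} (hX : ∀ p ∈ X, p.1 ∈ L' ∧ p.2 ∈ L')
    (h : G.LegalEnd q X r) (hb : G.Broken C q) : G.Broken C r := by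
  induction h with
  | nil => exact hb
  | cons t h ih =>
    rename_i q q' r a b X'
    have hp := hX (a, b) List.mem_cons_self
    exact ih (fun p hp => hX p (List.mem_cons_of_mem _ hp))
      (hpres _ _ _ _ hb t hp.1 hp.2)

end Gadget

theorem postselect_legal_iff {Q L : Type} (G : Gadget Q L) (C : List (L × L)) (L' : Set L)
    (hpres : ∀ q a q' b, G.Broken C q → G.T q a q' b → a ∈ L' → b ∈ L' → G.Broken C q')
    (q : Q) (hq : ¬ G.Broken C q)
    (X : List (L × L)) (hX : ∀ p ∈ X, p.1 ∈ L' ∧ p.2 ∈ L') :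
    (G.PostSelect C L').Legal q X ↔ G.Legal q (X ++ C) := by
  constructor
  · rintro ⟨r, h⟩
    -- first show the end state r is nonbroken and X is legal in G
    have key : G.LegalEnd q X r ∧ ¬ G.Broken C r := by
      clear hX
      induction h with
      | nil q => exact ⟨.nil q, hq⟩
      | cons t h ih =>
        obtain ⟨t, _, _, _, hr'⟩ := t
        obtain ⟨h1, h2⟩ := ih hr'
        
        exact ⟨.cons t h1, h2⟩
    obtain ⟨h1, hr⟩ := key
    obtain ⟨s, hC⟩ := not_not.mp hr
    exact ⟨s, h1.append hC⟩
  · rintro ⟨r, h⟩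
    induction X generalizing q with
    | nil => exact ⟨q, .nil q⟩
    | cons p X ih =>
      obtain ⟨a, b⟩ := p
      cases h with
      | @cons _ q' _ _ _ _ t h =>
        have hp := hX (a, b) List.mem_cons_self
        have hq' : ¬ G.Broken C q' := by
          intro hb
          obtain ⟨m, h1, h2⟩ := h.split
          exact Gadget.broken_propagate hpres
            (fun p hp => hX p (List.mem_cons_of_mem _ hp)) h1 hb ⟨_, h2⟩
        obtain ⟨s, hs⟩ := ih q' hq' (fun p hp => hX p (List.mem_cons_of_mem _ hp)) h
        exact ⟨s, .cons ⟨t, hp.1, hp.2, hq, hq'⟩ hs⟩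
end

section
/- For the self-closing door gadget (directed open-optional), any legal traversal sequence from the closed state contains, before every traversal entrance→exit, at least one more visit to the opening self-loop than the number of earlier entrance→exit traversals; in particular, the number of entrance→exit traversals in any legal sequence is at most the number of opening self-loop traversals. -/
/-- The directed open-optional self-closing door.
States: `true = open`, `false = closed`.
Locations: `0 = opening`, `1 = entrance`, `2 = exit`. -/
def SCD : Gadget Bool (Fin 3) where
  T q a r b :=
    (q = false ∧ a = 0 ∧ r = true ∧ b = 0) ∨   -- (closed,opening) → (open,opening)
    (q = true ∧ a = 0 ∧ r = true ∧ b = 0) ∨    -- (open,opening) → (open,opening)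
    (q = true ∧ a = 1 ∧ r = false ∧ b = 2)     -- (open,entrance) → (closed,exit)


lemma cnt1 (l : List (Fin 3 × Fin 3)) :
    ((0,0) :: l).count ((1:Fin 3),(2:Fin 3)) = l.count ((1,2)) := by
  rw [List.count_cons, if_neg (by decide)]; omega
lemma cnt2 (l : List (Fin 3 × Fin 3)) :
    ((0,0) :: l).count ((0:Fin 3),(0:Fin 3)) = l.count ((0,0)) + 1 := by
  rw [List.count_cons, if_pos (by decide)]
lemma cnt3 (l : List (Fin 3 × Fin 3)) :
    ((1,2) :: l).count ((1:Fin 3),(2:Fin 3)) = l.count ((1,2)) + 1 := by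
  rw [List.count_cons, if_pos (by decide)]
lemma cnt4 (l : List (Fin 3 × Fin 3)) :
    ((1,2) :: l).count ((0:Fin 3),(0:Fin 3)) = l.count ((0,0)) := by
  rw [List.count_cons, if_neg (by decide)]; omega

lemma scd_key : ∀ {q : Bool} {X : List (Fin 3 × Fin 3)} {r : Bool},
    SCD.LegalEnd q X r →
    (∀ i (hi : i < X.length), X[i]'hi = ((1 : Fin 3), (2 : Fin 3)) →
      (X.take i).count ((1 : Fin 3), (2 : Fin 3)) + (cond q 0 1) ≤
        (X.take i).count ((0 : Fin 3), (0 : Fin 3))) ∧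
    X.count ((1 : Fin 3), (2 : Fin 3)) + (cond r 1 0) ≤
      X.count ((0 : Fin 3), (0 : Fin 3)) + (cond q 1 0) := by
  intro q X r h
  induction h with
  | nil q =>
    refine ⟨fun i hi => by simp at hi, ?_⟩
    cases q <;> simp
  | @cons q q' r a b X hT hrest ih =>
    obtain ⟨ih1, ih2⟩ := ih
    rcases hT with ⟨hq, ha, hq', hb⟩ | ⟨hq, ha, hq', hb⟩ | ⟨hq, ha, hq', hb⟩ <;>
      subst hq ha hq' hb <;> constructor
    · intro i hi hX
      match i with
      | 0 =>
        rw [List.getElem_cons_zero] at hX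
        exact absurd hX (by decide)
      | Nat.succ j =>
        rw [List.getElem_cons_succ] at hX
        have := ih1 j (by simpa using hi) hX
        rw [List.take_succ_cons, cnt1, cnt2]
        simp only [cond_true, cond_false] at this ⊢
        omega
    · rw [cnt1, cnt2]
      simp only [cond_true, cond_false] at ih2 ⊢
      omega
    · intro i hi hX
      match i with
      | 0 =>
        rw [List.getElem_cons_zero] at hX
        exact absurd hX (by decide)
      | Nat.succ j =>
        rw [List.getElem_cons_succ] at hX
        have := ih1 j (by simpa using hi) hX
        rw [List.take_succ_cons, cnt1, cnt2]
        simp only [cond_true, cond_false] at this ⊢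
        omega
    · rw [cnt1, cnt2]
      simp only [cond_true, cond_false] at ih2 ⊢
      omega
    · intro i hi hX
      match i with
      | 0 => simp
      | Nat.succ j =>
        rw [List.getElem_cons_succ] at hX
        have := ih1 j (by simpa using hi) hX
        rw [List.take_succ_cons, cnt3, cnt4]
        simp only [cond_true, cond_false] at this ⊢
        omega
    · rw [cnt3, cnt4]
      simp only [cond_true, cond_false] at ih2 ⊢
      omega

theorem scd_openings_bound (X : List (Fin 3 × Fin 3)) (h : SCD.Legal false X) :
    (∀ i (hi : i < X.length), X[i]'hi = ((1 : Fin 3), (2 : Fin 3)) →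
      (X.take i).count ((1 : Fin 3), (2 : Fin 3)) <
        (X.take i).count ((0 : Fin 3), (0 : Fin 3))) ∧
    X.count ((1 : Fin 3), (2 : Fin 3)) ≤ X.count ((0 : Fin 3), (0 : Fin 3)) := by
  obtain ⟨r, hr⟩ := h
  obtain ⟨h1, h2⟩ := scd_key hr
  simp only [cond_true, cond_false] at h1 h2
  refine ⟨fun i hi hX => by have := h1 i hi hX; omega, by cases r <;> simp only [cond_true, cond_false] at h2 <;> omega⟩
end
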